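/- arXiv:2403.11043 — 2 statements merged into one kernel-verified Lean document; each statement's English description precedes it below -/
import Mathlib

section
/- Let K_x, γ_x, K_e, γ_e, E, x0, e0, w, X, W be nonnegative real numbers with γ_x·γ_e < 1. If X ≤ K_x·x0 + γ_x·W + γ_x·w and W ≤ K_e·e0 + γ_e·(X + E·w), then X + W ≤ (max{K_x·(1+γ_e), K_e·(1+γ_x)}/(1 − γ_x·γ_e))·(x0 + e0) + ((γ_x + γ_e·E + (1+E)·γ_x·γ_e)/(1 − γ_x·γ_e))·w. -/
/-- Combined small-gain bound concluding the proof of Theorem 1. -/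
theorem smallGain_combined
    (Kx γx Ke γe E x0 e0 w X W : ℝ)
    (hKx : 0 ≤ Kx) (hγx : 0 ≤ γx) (hKe : 0 ≤ Ke) (hγe : 0 ≤ γe)
    (hE : 0 ≤ E) (hx0 : 0 ≤ x0) (he0 : 0 ≤ e0) (hw : 0 ≤ w)
    (hX : 0 ≤ X) (hW : 0 ≤ W)
    (hsg : γx * γe < 1)
    (h1 : X ≤ Kx * x0 + γx * W + γx * w)
    (h2 : W ≤ Ke * e0 + γe * (X + E * w)) :
    X + W ≤ (max (Kx * (1 + γe)) (Ke * (1 + γx)) / (1 - γx * γe)) * (x0 + e0)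
      + ((γx + γe * E + (1 + E) * (γx * γe)) / (1 - γx * γe)) * w := by
  have hd : 0 < 1 - γx * γe := by linarith
  have hm1 : Kx * (1 + γe) ≤ max (Kx * (1 + γe)) (Ke * (1 + γx)) := le_max_left _ _
  have hm2 : Ke * (1 + γx) ≤ max (Kx * (1 + γe)) (Ke * (1 + γx)) := le_max_right _ _
  rw [div_mul_eq_mul_div, div_mul_eq_mul_div, ← add_div, le_div_iff₀ hd]
  nlinarith [mul_le_mul_of_nonneg_left h2 hγx, mul_le_mul_of_nonneg_left h1 hγe,
    mul_nonneg hx0 (le_trans (mul_nonneg hKx (by linarith)) hm1),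
    mul_nonneg he0 (le_trans (mul_nonneg hKe (by linarith)) hm2)]
end

section
/- Let A be an n×n real matrix, C an m×n real matrix, L an n×m real matrix, A12 an n×p real matrix, B1 an n×q real matrix, and P an n×n symmetric real matrix. Let ρ > 0 and ε ≥ 3ρ be real numbers, and suppose (A + L·C)ᵀ·P + P·(A + L·C) = −(ε/2)·I. Then for all x ∈ ℝⁿ, e ∈ ℝᵖ, w ∈ ℝ^q: 2·⟪x, P·(A·x + A12·e + B1·w)⟫ ≤ −(ε/4)·‖x‖² + (4/ρ)·‖P·L‖²·‖C·x‖² + (4/ρ)·‖P·A12‖²·‖e‖² + (4/ρ)·‖P·B1‖²·‖w‖², where ⟪·,·⟫ is the Euclidean inner product, ‖·‖ on vectors is the Euclidean norm, and ‖·‖ on matrices is the operator norm induced by the Euclidean norms. -/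
open Matrix RealInnerProductSpace

/-- The operator norm of a real matrix induced by the Euclidean (ℓ²) norms on
domain and codomain. -/
noncomputable def l2OpNorm {m n : Type*} [Fintype m] [Fintype n] [DecidableEq n]
    (M : Matrix m n ℝ) : ℝ :=
  ‖LinearMap.toContinuousLinearMap (Matrix.toEuclideanLin M)‖

lemma l2OpNorm_nonneg {m n : Type*} [Fintype m] [Fintype n] [DecidableEq n]
    (M : Matrix m n ℝ) : 0 ≤ l2OpNorm M := norm_nonneg _

lemma toEuclideanLin_le {m n : Type*} [Fintype m] [Fintype n] [DecidableEq n]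
    (M : Matrix m n ℝ) (v : EuclideanSpace ℝ n) :
    ‖Matrix.toEuclideanLin M v‖ ≤ l2OpNorm M * ‖v‖ :=
  (LinearMap.toContinuousLinearMap (Matrix.toEuclideanLin M)).le_opNorm v

lemma toEuclideanLin_mul_apply {m n p : Type*} [Fintype m] [Fintype n] [Fintype p]
    [DecidableEq n] [DecidableEq p]
    (M : Matrix m n ℝ) (N : Matrix n p ℝ) (v : EuclideanSpace ℝ p) :
    Matrix.toEuclideanLin (M * N) v
      = Matrix.toEuclideanLin M (Matrix.toEuclideanLin N v) := by
  simp [Matrix.toEuclideanLin_apply, Matrix.mulVec_mulVec]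

lemma cross_bound {n p : ℕ} (M : Matrix (Fin n) (Fin p) ℝ) {ρ : ℝ} (hρ : 0 < ρ)
    (x : EuclideanSpace ℝ (Fin n)) (v : EuclideanSpace ℝ (Fin p)) :
    2 * |⟪x, Matrix.toEuclideanLin M v⟫|
      ≤ ρ / 4 * ‖x‖ ^ 2 + 4 / ρ * l2OpNorm M ^ 2 * ‖v‖ ^ 2 := by
  have h1 : |⟪x, Matrix.toEuclideanLin M v⟫| ≤ ‖x‖ * ‖Matrix.toEuclideanLin M v‖ :=
    abs_real_inner_le_norm _ _
  have h2 := toEuclideanLin_le M v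
  have h3 : 0 ≤ ‖x‖ := norm_nonneg _
  set a := ‖x‖ with ha
  set b := l2OpNorm M * ‖v‖ with hb
  have hib : |⟪x, Matrix.toEuclideanLin M v⟫| ≤ a * b :=
    h1.trans (mul_le_mul_of_nonneg_left h2 h3)
  have hid : (ρ / 2 * a - 2 * b) ^ 2 / ρ = ρ / 4 * a ^ 2 + 4 / ρ * b ^ 2 - 2 * (a * b) := by
    field_simp
    ring
  have hq : 2 * (a * b) ≤ ρ / 4 * a ^ 2 + 4 / ρ * b ^ 2 := by
    have := div_nonneg (sq_nonneg (ρ / 2 * a - 2 * b)) hρ.le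
    linarith
  have hbsq : b ^ 2 = l2OpNorm M ^ 2 * ‖v‖ ^ 2 := by rw [hb, mul_pow]
  calc 2 * |⟪x, Matrix.toEuclideanLin M v⟫| ≤ 2 * (a * b) := by linarith
    _ ≤ ρ / 4 * a ^ 2 + 4 / ρ * b ^ 2 := hq
    _ = ρ / 4 * ‖x‖ ^ 2 + 4 / ρ * l2OpNorm M ^ 2 * ‖v‖ ^ 2 := by rw [hbsq, ha]; ring

/-- The Lyapunov dissipation inequality established in the proof of Theorem 2
(L₂-to-L₂ detectability of the x-subsystem). -/
theorem lyapunov_dissipation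
    (n m p q : ℕ)
    (A : Matrix (Fin n) (Fin n) ℝ) (C : Matrix (Fin m) (Fin n) ℝ)
    (L : Matrix (Fin n) (Fin m) ℝ) (A12 : Matrix (Fin n) (Fin p) ℝ)
    (B1 : Matrix (Fin n) (Fin q) ℝ) (P : Matrix (Fin n) (Fin n) ℝ)
    (hP : P.IsSymm) (ρ ε : ℝ) (hρ : 0 < ρ) (hε : 3 * ρ ≤ ε)
    (hLyap : (A + L * C)ᵀ * P + P * (A + L * C) = (-(ε / 2)) • (1 : Matrix (Fin n) (Fin n) ℝ)) :
    ∀ (x : EuclideanSpace ℝ (Fin n)) (e : EuclideanSpace ℝ (Fin p))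
      (w : EuclideanSpace ℝ (Fin q)),
      2 * ⟪x, Matrix.toEuclideanLin P
            (Matrix.toEuclideanLin A x + Matrix.toEuclideanLin A12 e
              + Matrix.toEuclideanLin B1 w)⟫
        ≤ -(ε / 4) * ‖x‖ ^ 2
          + (4 / ρ) * l2OpNorm (P * L) ^ 2 * ‖Matrix.toEuclideanLin C x‖ ^ 2
          + (4 / ρ) * l2OpNorm (P * A12) ^ 2 * ‖e‖ ^ 2
          + (4 / ρ) * l2OpNorm (P * B1) ^ 2 * ‖w‖ ^ 2 := by
  intro x e w
  -- adjoint fact: ⟪x, f Mᵀ y⟫ = ⟪f M x, y⟫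
  have hadj : ∀ (M : Matrix (Fin n) (Fin n) ℝ) (y : EuclideanSpace ℝ (Fin n)),
      ⟪x, Matrix.toEuclideanLin Mᵀ y⟫ = ⟪Matrix.toEuclideanLin M x, y⟫ := by
    intro M y
    have h : Matrix.toEuclideanLin Mᴴ = LinearMap.adjoint (Matrix.toEuclideanLin M) :=
      Matrix.toEuclideanLin_conjTranspose_eq_adjoint M
    have hMT : Mᴴ = Mᵀ := by ext i j; simp [Matrix.conjTranspose_apply]
    rw [← hMT, h, LinearMap.adjoint_inner_right]
  -- Lyapunov quadratic term
  have hPsym : Pᵀ = P := hP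
  have key : 2 * ⟪x, Matrix.toEuclideanLin P (Matrix.toEuclideanLin (A + L * C) x)⟫
      = -(ε / 2) * ‖x‖ ^ 2 := by
    have h1 : ⟪x, Matrix.toEuclideanLin ((A + L * C)ᵀ * P + P * (A + L * C)) x⟫
        = -(ε / 2) * ‖x‖ ^ 2 := by
      rw [hLyap]
      have : Matrix.toEuclideanLin ((-(ε / 2)) • (1 : Matrix (Fin n) (Fin n) ℝ)) x
          = (-(ε / 2)) • x := by
        simp [Matrix.toEuclideanLin_apply]
      rw [this, real_inner_smul_right, real_inner_self_eq_norm_sq]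
    rw [map_add, LinearMap.add_apply, inner_add_right,
      toEuclideanLin_mul_apply, toEuclideanLin_mul_apply, hadj] at h1
    have h2 : ⟪Matrix.toEuclideanLin (A + L * C) x, Matrix.toEuclideanLin P x⟫
        = ⟪x, Matrix.toEuclideanLin P (Matrix.toEuclideanLin (A + L * C) x)⟫ := by
      rw [real_inner_comm, ← hadj, hPsym]
    rw [h2] at h1
    linarith
  -- decompose the argument
  have hdecomp : Matrix.toEuclideanLin P
        (Matrix.toEuclideanLin A x + Matrix.toEuclideanLin A12 e
          + Matrix.toEuclideanLin B1 w)
      = Matrix.toEuclideanLin P (Matrix.toEuclideanLin (A + L * C) x)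
        - Matrix.toEuclideanLin (P * L) (Matrix.toEuclideanLin C x)
        + Matrix.toEuclideanLin (P * A12) e
        + Matrix.toEuclideanLin (P * B1) w := by
    rw [toEuclideanLin_mul_apply, toEuclideanLin_mul_apply, toEuclideanLin_mul_apply]
    have : Matrix.toEuclideanLin (A + L * C) x
        = Matrix.toEuclideanLin A x
          + Matrix.toEuclideanLin L (Matrix.toEuclideanLin C x) := by
      rw [map_add, LinearMap.add_apply, toEuclideanLin_mul_apply]
    rw [this]
    simp only [map_add]
    abel
  rw [hdecomp, inner_add_right, inner_add_right, inner_sub_right]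
  have c1 := cross_bound (P * L) hρ x (Matrix.toEuclideanLin C x)
  have c2 := cross_bound (P * A12) hρ x e
  have c3 := cross_bound (P * B1) hρ x w
  have habs1 : -⟪x, Matrix.toEuclideanLin (P * L) (Matrix.toEuclideanLin C x)⟫
      ≤ |⟪x, Matrix.toEuclideanLin (P * L) (Matrix.toEuclideanLin C x)⟫| :=
    neg_le_abs _
  have habs2 : ⟪x, Matrix.toEuclideanLin (P * A12) e⟫
      ≤ |⟪x, Matrix.toEuclideanLin (P * A12) e⟫| := le_abs_self _
  have habs3 : ⟪x, Matrix.toEuclideanLin (P * B1) w⟫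
      ≤ |⟪x, Matrix.toEuclideanLin (P * B1) w⟫| := le_abs_self _
  have hx2 : 0 ≤ ‖x‖ ^ 2 := sq_nonneg _
  nlinarith [key, c1, c2, c3, habs1, habs2, habs3, hx2]
end
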